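/- arXiv:1406.2522 — 3 statements merged into one kernel-verified Lean document; each statement's English description precedes it below -/
import Mathlib

section
/- Let n be a positive integer and let A ∈ M_n(ℂ) be a nonzero matrix such that the Schur map S_A is multiplicative. Then all diagonal entries of A equal 1 and the characteristic polynomial of A is X^{n-1}·(X − n); in particular the eigenvalues of A are 0 with algebraic multiplicity n−1 and n with algebraic multiplicity 1. -/
/-!
Testing multiplicativity of `S_A` on matrix units `E_ik * E_kj = E_ij` gives
`A i j = A i k * A k j` for all `i j k`. A nonzero entry then forces `A i i = 1`, and taking `k`
fixed shows that `A` is the rank-one matrix `u vᵀ` with `u = A · k`, `v = A k ·` and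
`v ⬝ u = ∑ i, A i i = n`, whose characteristic polynomial is `X ^ n - n X ^ (n - 1)`.
-/

open Matrix Polynomial

namespace Matrix

variable {n R : Type*}

def IsSchurMultiplicative [Fintype n] [Semiring R] (A : Matrix n n R) : Prop :=
  ∀ B C : Matrix n n R, A ⊙ (B * C) = A ⊙ B * A ⊙ C

theorem hadamard_single [DecidableEq n] [MulZeroClass R] (A : Matrix n n R) (i j : n) (c : R) :
    A ⊙ single i j c = single i j (A i j * c) := by
  ext i' j'
  by_cases h : i = i' ∧ j = j'
  · obtain ⟨rfl, rfl⟩ := h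
    simp
  · simp [h]

theorem IsSchurMultiplicative.apply_eq_mul [Fintype n] [DecidableEq n] [Semiring R]
    {A : Matrix n n R} (hA : A.IsSchurMultiplicative) (i j k : n) :
    A i j = A i k * A k j := by
  simpa [hadamard_single, single_mul_single_same] using
    congrFun (congrFun (hA (single i k 1) (single k j 1)) i) j

section ApplyEqMul

variable {A : Matrix n n R}

theorem eq_vecMulVec_of_apply_eq_mul [Mul R] (h : ∀ i j k, A i j = A i k * A k j) (p : n) :
    A = vecMulVec (fun i => A i p) (A p) := by
  ext i j
  exact h i j p

theorem diag_eq_one_of_apply_eq_mul [MulZeroOneClass R] [IsRightCancelMulZero R]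
    (h : ∀ i j k, A i j = A i k * A k j) (hA : A ≠ 0) (i : n) : A i i = 1 := by
  obtain ⟨p, q, hpq⟩ : ∃ p q, A p q ≠ 0 := by
    by_contra! h0
    exact hA (ext h0)
  have : Nontrivial R := ⟨⟨_, _, hpq⟩⟩
  have hpp : A p p = 1 := (mul_eq_right₀ hpq).1 (h p q p).symm
  have hip : A i p ≠ 0 := right_ne_zero_of_mul_eq_one ((h p p i).symm.trans hpp)
  exact (mul_eq_right₀ hip).1 (h i p i).symm

theorem charpoly_eq_X_pow_mul_X_sub_C_of_apply_eq_mul [Fintype n] [DecidableEq n] [Nonempty n]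
    [CommRing R] (h : ∀ i j k, A i j = A i k * A k j) (hdiag : ∀ i, A i i = 1) :
    A.charpoly = X ^ (Fintype.card n - 1) * (X - C (Fintype.card n : R)) := by
  obtain ⟨p⟩ := ‹Nonempty n›
  have hdot : (fun i => A i p) ⬝ᵥ A p = Fintype.card n := by
    simp [dotProduct, ← h, hdiag]
  obtain ⟨m, hm⟩ := Nat.exists_eq_add_one.2 (Fintype.card_pos (α := n))
  rw [eq_vecMulVec_of_apply_eq_mul h p, charpoly_vecMulVec, hdot, hm, smul_eq_C_mul,
    Nat.add_sub_cancel]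
  ring

end ApplyEqMul

end Matrix

namespace Polynomial

variable {R : Type*} [CommRing R] [IsDomain R] {c : R}

theorem rootMultiplicity_zero_X_pow_mul_X_sub_C (hc : c ≠ 0) (m : ℕ) :
    (X ^ m * (X - C c)).rootMultiplicity 0 = m := by
  rw [rootMultiplicity_mul (mul_ne_zero (pow_ne_zero _ X_ne_zero) (X_sub_C_ne_zero c)),
    rootMultiplicity_eq_zero (p := X - C c) (by simpa [sub_eq_zero] using hc)]
  simpa using rootMultiplicity_X_sub_C_pow (0 : R) m

theorem rootMultiplicity_self_X_pow_mul_X_sub_C (hc : c ≠ 0) (m : ℕ) :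
    (X ^ m * (X - C c)).rootMultiplicity c = 1 := by
  rw [rootMultiplicity_mul (mul_ne_zero (pow_ne_zero _ X_ne_zero) (X_sub_C_ne_zero c)),
    rootMultiplicity_X_sub_C_self, rootMultiplicity_eq_zero (by simp [hc])]

end Polynomial

theorem schur_multiplicative_charpoly_general (n : ℕ)
    (A : Matrix (Fin n) (Fin n) ℂ) (hA : A ≠ 0)
    (hmul : ∀ B C : Matrix (Fin n) (Fin n) ℂ,
      Matrix.hadamard A (B * C) = Matrix.hadamard A B * Matrix.hadamard A C) :
    (∀ i, A i i = 1) ∧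
      A.charpoly = X ^ (n - 1) * (X - C (n : ℂ)) ∧
      A.charpoly.rootMultiplicity 0 = n - 1 ∧
      A.charpoly.rootMultiplicity (n : ℂ) = 1 := by
  have hentry : ∀ i j k, A i j = A i k * A k j := IsSchurMultiplicative.apply_eq_mul hmul
  have hdiag : ∀ i, A i i = 1 := diag_eq_one_of_apply_eq_mul hentry hA
  have hn : n ≠ 0 := by
    rintro rfl
    exact hA (Subsingleton.elim _ _)
  have : NeZero n := ⟨hn⟩
  have hcp : A.charpoly = X ^ (n - 1) * (X - C (n : ℂ)) := by
    simpa using charpoly_eq_X_pow_mul_X_sub_C_of_apply_eq_mul hentry hdiag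
  rw [hcp]
  exact ⟨hdiag, rfl, rootMultiplicity_zero_X_pow_mul_X_sub_C (Nat.cast_ne_zero.2 hn) _,
    rootMultiplicity_self_X_pow_mul_X_sub_C (Nat.cast_ne_zero.2 hn) _⟩

theorem schur_multiplicative_charpoly (n : ℕ) (hn : 0 < n)
    (A : Matrix (Fin n) (Fin n) ℂ) (hA : A ≠ 0)
    (hmul : ∀ B C : Matrix (Fin n) (Fin n) ℂ,
      Matrix.hadamard A (B * C) = Matrix.hadamard A B * Matrix.hadamard A C) :
    (∀ i, A i i = 1) ∧
      A.charpoly = X ^ (n - 1) * (X - C (n : ℂ)) ∧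
      A.charpoly.rootMultiplicity 0 = n - 1 ∧
      A.charpoly.rootMultiplicity (n : ℂ) = 1 :=
  schur_multiplicative_charpoly_general n A hA hmul
end

section
/- Let n be a positive integer and let A ∈ M_n(ℂ) be a nonzero matrix such that the Schur map S_A is multiplicative. Then A_{ij} · A_{ji} = 1 for all i, j (equivalently, the conjugate transpose of A equals the entrywise complex conjugate of the entrywise inverse of A), and A is diagonalizable: there exist an invertible matrix P and a diagonal matrix D with A = P D P^{-1}. -/
/-!
Multiplicativity of `B ↦ A ⊙ B` on the matrix units `Eᵢₖ Eₖⱼ = Eᵢⱼ` gives the cocycle identity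
`Aᵢⱼ = Aᵢₖ Aₖⱼ`. Since `A ≠ 0` this forces `Aᵢᵢ = 1`, hence `Aᵢⱼ Aⱼᵢ = 1`, and for any fixed `p`
it writes `A = D J D⁻¹` with `D = diag (Aᵢₚ)` and `J` the all-ones matrix. `J` is Hermitian, so
diagonalizable by the spectral theorem, and so is its conjugate `A`.
-/

open Matrix

namespace Matrix

def IsDiagonalizable {ι R : Type*} [Fintype ι] [DecidableEq ι] [CommRing R]
    (A : Matrix ι ι R) : Prop :=
  ∃ (P : Matrix ι ι R) (d : ι → R), IsUnit P ∧ A = P * diagonal d * P⁻¹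

theorem hadamard_single_one {ι R : Type*} [DecidableEq ι] [MulZeroOneClass R]
    (A : Matrix ι ι R) (i j : ι) : A ⊙ single i j 1 = single i j (A i j) := by
  ext k l
  by_cases h : i = k ∧ j = l
  · obtain ⟨rfl, rfl⟩ := h
    simp
  · simp [single_apply_of_ne (h := h)]

theorem apply_self_eq_one_of_apply_eq_mul_apply {ι R : Type*} [CommMonoidWithZero R]
    [IsCancelMulZero R] {A : Matrix ι ι R} (hA : A ≠ 0)
    (hcocycle : ∀ i j k, A i j = A i k * A k j) (i : ι) : A i i = 1 := by
  obtain ⟨p, q, hpq⟩ : ∃ p q, A p q ≠ 0 := by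
    by_contra! h
    exact hA (ext h)
  have hpp : A p p = 1 := (mul_eq_right₀ hpq).mp (hcocycle p q p).symm
  rw [hcocycle i i p, mul_comm, ← hcocycle p p i, hpp]

section

variable {ι R : Type*} [Fintype ι] [DecidableEq ι]

theorem apply_eq_mul_apply_of_hadamard_mul [CommSemiring R] {A : Matrix ι ι R}
    (hmul : ∀ B C : Matrix ι ι R, A ⊙ (B * C) = A ⊙ B * A ⊙ C) (i j k : ι) :
    A i j = A i k * A k j := by
  have h := congrFun₂ (hmul (single i k 1) (single k j 1)) i j
  simpa [single_mul_single_same, hadamard_single_one] using h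

theorem eq_diagonal_conj_allOnes_of_apply_eq_mul_apply [CommRing R] {A : Matrix ι ι R}
    (hcocycle : ∀ i j k, A i j = A i k * A k j) (hone : ∀ i, A i i = 1) (p : ι) :
    IsUnit (diagonal fun i ↦ A i p) ∧
      A = diagonal (fun i ↦ A i p) * of (fun _ _ ↦ 1) * (diagonal fun i ↦ A i p)⁻¹ := by
  have hinv : diagonal (fun i ↦ A i p) * diagonal (fun j ↦ A p j) = 1 := by
    rw [diagonal_mul_diagonal, ← diagonal_one]
    congr 1
    ext i
    rw [← hcocycle, hone]
  refine ⟨IsUnit.of_mul_eq_one _ hinv, ?_⟩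
  rw [inv_eq_right_inv hinv]
  ext i j
  simp [hcocycle i j p]

theorem IsDiagonalizable.conj [CommRing R] {B Q : Matrix ι ι R} (hB : B.IsDiagonalizable)
    (hQ : IsUnit Q) : (Q * B * Q⁻¹).IsDiagonalizable := by
  obtain ⟨P, d, hP, rfl⟩ := hB
  exact ⟨Q * P, d, hQ.mul hP, by rw [mul_inv_rev]; simp only [Matrix.mul_assoc]⟩

theorem IsHermitian.isDiagonalizable {𝕜 : Type*} [RCLike 𝕜] {A : Matrix ι ι 𝕜}
    (hA : A.IsHermitian) : A.IsDiagonalizable := by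
  set U := hA.eigenvectorUnitary
  have hU : (U : Matrix ι ι 𝕜) * star U = 1 := Unitary.mul_star_self_of_mem U.2
  refine ⟨U, RCLike.ofReal ∘ hA.eigenvalues, IsUnit.of_mul_eq_one _ hU, ?_⟩
  rw [inv_eq_right_inv hU]
  simpa [Unitary.conjStarAlgAut_apply] using hA.spectral_theorem

end

end Matrix

theorem schur_multiplicative_entrywise_inverse_and_diagonalizable_general (n : ℕ)
    (A : Matrix (Fin n) (Fin n) ℂ) (hA : A ≠ 0)
    (hmul : ∀ B C : Matrix (Fin n) (Fin n) ℂ,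
      Matrix.hadamard A (B * C) = Matrix.hadamard A B * Matrix.hadamard A C) :
    (∀ i j, A i j * A j i = 1) ∧
      (Aᴴ = Matrix.of fun i j => star ((A i j)⁻¹)) ∧
      ∃ (P : Matrix (Fin n) (Fin n) ℂ) (d : Fin n → ℂ),
        IsUnit P ∧ A = P * Matrix.diagonal d * P⁻¹ := by
  have hcocycle := apply_eq_mul_apply_of_hadamard_mul hmul
  have hone := apply_self_eq_one_of_apply_eq_mul_apply hA hcocycle
  have hmul_swap (i j : Fin n) : A i j * A j i = 1 := by rw [← hcocycle, hone]
  refine ⟨hmul_swap, ?_, ?_⟩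
  · ext i j
    rw [conjTranspose_apply, of_apply, ← eq_inv_of_mul_eq_one_right (hmul_swap i j)]
  · obtain ⟨p⟩ : Nonempty (Fin n) := by
      by_contra! h
      exact hA (Subsingleton.elim _ _)
    obtain ⟨hD, hAD⟩ := eq_diagonal_conj_allOnes_of_apply_eq_mul_apply hcocycle hone p
    have hJ : (of fun _ _ ↦ 1 : Matrix (Fin n) (Fin n) ℂ).IsHermitian := by
      ext i j
      simp
    rw [hAD]
    exact hJ.isDiagonalizable.conj hD

theorem schur_multiplicative_entrywise_inverse_and_diagonalizable (n : ℕ) (hn : 0 < n)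
    (A : Matrix (Fin n) (Fin n) ℂ) (hA : A ≠ 0)
    (hmul : ∀ B C : Matrix (Fin n) (Fin n) ℂ,
      Matrix.hadamard A (B * C) = Matrix.hadamard A B * Matrix.hadamard A C) :
    (∀ i j, A i j * A j i = 1) ∧
      (Aᴴ = Matrix.of fun i j => star ((A i j)⁻¹)) ∧
      ∃ (P : Matrix (Fin n) (Fin n) ℂ) (d : Fin n → ℂ),
        IsUnit P ∧ A = P * Matrix.diagonal d * P⁻¹ :=
  schur_multiplicative_entrywise_inverse_and_diagonalizable_general n A hA hmul
end

section
/- Let n be a positive integer. Let P be the set of matrices A ∈ M_n(ℂ) such that A is positive semidefinite and the Schur map S_A is multiplicative. Then the map Φ sending A ∈ P to the vector (A_{1,2}, A_{1,3}, …, A_{1,n}) of off-diagonal first-row entries is a bijection from P onto the set of vectors in ℂ^{n−1} all of whose coordinates have modulus 1; moreover Φ(A ∘ B) equals the coordinatewise product Φ(A)·Φ(B) for all A, B ∈ P. (Thus P, with the Schur product, is isomorphic as a group to the (n−1)-torus.) -/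
open Matrix
open scoped ComplexOrder

/-!
Testing Schur multiplicativity on matrix units shows it is equivalent to the cocycle identity
`A i k * A k j = A i j`. For `A ≠ 0` this forces a unit diagonal, and together with Hermitian
symmetry it gives `A i j = conj (w i) * w j` for the unimodular first row `w` of `A`, normalised by
`w 0 = 1`. Conversely every such rank-one matrix is positive semidefinite and satisfies the
cocycle identity, so `Φ` is a bijection, and it is multiplicative since it reads off entries.
-/

def Matrix.IsSchurMultiplicative_s17 {m R : Type*} [Fintype m] [Mul R] [AddCommMonoid R]
    (A : Matrix m m R) : Prop :=
  ∀ B C : Matrix m m R, A ⊙ (B * C) = A ⊙ B * A ⊙ C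

theorem RCLike.norm_eq_one_iff_star_mul_self {𝕜 : Type*} [RCLike 𝕜] {z : 𝕜} :
    ‖z‖ = 1 ↔ star z * z = 1 := by
  rw [RCLike.star_def, RCLike.conj_mul]
  norm_cast
  rw [pow_eq_one_iff_of_nonneg (norm_nonneg z) two_ne_zero]

namespace Matrix

variable {m : Type*} [Fintype m] [DecidableEq m]

theorem isSchurMultiplicative_iff {R : Type*} [CommSemiring R] {A : Matrix m m R} :
    A.IsSchurMultiplicative_s17 ↔ ∀ i j k, A i k * A k j = A i j := by
  refine ⟨fun h i j k => ?_, fun h B C => ?_⟩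
  · simpa [hadamard_apply, mul_apply, single_mul_single_same, single_apply] using
      (congrFun₂ (h (single i k 1) (single k j 1)) i j).symm
  · ext i j
    simp only [hadamard_apply, mul_apply, Finset.mul_sum]
    exact Finset.sum_congr rfl fun k _ => by rw [← h i j k]; ring

theorem IsSchurMultiplicative_s17.diag_eq_one {R : Type*} [CommRing R] [IsDomain R]
    {A : Matrix m m R} (h : A.IsSchurMultiplicative_s17) (hA : A ≠ 0) (k : m) : A k k = 1 := by
  have cocycle := isSchurMultiplicative_iff.mp h
  obtain ⟨i, j, hij⟩ : ∃ i j, A i j ≠ 0 := by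
    by_contra! hzero
    exact hA (ext hzero)
  have hii : A i i = 1 := (mul_eq_right₀ hij).mp (cocycle i j i)
  have hki : A k i ≠ 0 := fun hzero => by simpa [hzero, hii] using cocycle i i k
  exact (mul_eq_right₀ hki).mp (cocycle k i k)

variable {𝕜 : Type*} [RCLike 𝕜]

theorem IsSchurMultiplicative_s17.eq_vecMulVec_star_row {A : Matrix m m 𝕜}
    (h : A.IsSchurMultiplicative_s17) (hH : A.IsHermitian) (i : m) :
    A = vecMulVec (star (A i)) (A i) := by
  ext j k
  rw [vecMulVec_apply, Pi.star_apply, hH.apply, isSchurMultiplicative_iff.mp h]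

theorem IsSchurMultiplicative_s17.norm_apply_eq_one {A : Matrix m m 𝕜}
    (h : A.IsSchurMultiplicative_s17) (hA : A ≠ 0) (hH : A.IsHermitian) (i k : m) :
    ‖A i k‖ = 1 := by
  rw [RCLike.norm_eq_one_iff_star_mul_self, hH.apply, isSchurMultiplicative_iff.mp h,
    h.diag_eq_one hA]

theorem isSchurMultiplicative_vecMulVec_star {w : m → 𝕜} (hw : ∀ i, ‖w i‖ = 1) :
    (vecMulVec (star w) w).IsSchurMultiplicative_s17 :=
  isSchurMultiplicative_iff.mpr fun i j k => by
    simp only [vecMulVec_apply, Pi.star_apply]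
    linear_combination (star (w i) * w j) * RCLike.norm_eq_one_iff_star_mul_self.mp (hw k)

end Matrix

theorem Matrix.vecMulVec_star_ne_zero {m 𝕜 : Type*} [RCLike 𝕜] [Nonempty m] {w : m → 𝕜}
    (hw : ∀ i, ‖w i‖ = 1) : vecMulVec (star w) w ≠ 0 := fun h0 => by
  obtain ⟨i⟩ := ‹Nonempty m›
  exact one_ne_zero <|
    (RCLike.norm_eq_one_iff_star_mul_self.mp (hw i)).symm.trans (congrFun₂ h0 i i)

theorem posSemidef_schur_multiplicative_torus (n : ℕ)
    (P : Set (Matrix (Fin (n + 1)) (Fin (n + 1)) ℂ))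
    (hP : P = {A | A ≠ 0 ∧ A.PosSemidef ∧
      ∀ B C : Matrix (Fin (n + 1)) (Fin (n + 1)) ℂ,
        Matrix.hadamard A (B * C) = Matrix.hadamard A B * Matrix.hadamard A C})
    (Φ : Matrix (Fin (n + 1)) (Fin (n + 1)) ℂ → (Fin n → ℂ))
    (hΦ : ∀ A, ∀ i : Fin n, Φ A i = A 0 i.succ) :
    Set.BijOn Φ P {v : Fin n → ℂ | ∀ i, ‖v i‖ = 1} ∧
      ∀ A ∈ P, ∀ B ∈ P, Φ (Matrix.hadamard A B) = Φ A * Φ B := by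
  subst hP
  have row_zero {A} (hA : A ≠ 0) (hmul : A.IsSchurMultiplicative_s17) : A 0 = Fin.cons 1 (Φ A) := by
    ext k
    cases k using Fin.cases <;> simp [hΦ, hmul.diag_eq_one hA]
  refine ⟨⟨?mapsTo, ?injOn, ?surjOn⟩, fun A _ B _ => funext fun i => by simp [hΦ, hadamard_apply]⟩
  case mapsTo =>
    rintro A ⟨hA, hpsd, hmul⟩ i
    rw [hΦ]
    exact IsSchurMultiplicative_s17.norm_apply_eq_one hmul hA hpsd.isHermitian _ _
  case injOn =>
    rintro A ⟨hA, hApsd, hAmul⟩ B ⟨hB, hBpsd, hBmul⟩ hAB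
    rw [IsSchurMultiplicative_s17.eq_vecMulVec_star_row hAmul hApsd.isHermitian 0,
      IsSchurMultiplicative_s17.eq_vecMulVec_star_row hBmul hBpsd.isHermitian 0,
      row_zero hA hAmul, row_zero hB hBmul, hAB]
  case surjOn =>
    intro v hv
    set w : Fin (n + 1) → ℂ := Fin.cons 1 v
    have hw : ∀ i, ‖w i‖ = 1 := Fin.cases (by simp [w]) hv
    exact ⟨vecMulVec (star w) w, ⟨vecMulVec_star_ne_zero hw, posSemidef_vecMulVec_star_self w,
      isSchurMultiplicative_vecMulVec_star hw⟩, funext fun i => by simp [hΦ, w, vecMulVec_apply]⟩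
end
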